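/- There exists R > 0 such that for every point M ∈ ℝ² ∖ P with ‖M‖ > R at which both T and T∘T are defined, T(T(M)) − M belongs to the set {a_1, …, a_n, −a_1, …, −a_n} of signed spoke vectors of P. -/

import Mathlib

/-!
If `T` reflects `M` in `vertex k` and then `T M` in `vertex l`, then
`T (T M) - M = 2 (vertex l - vertex k)`. The direction `u = vertex k - M` lies in the closed
cone, bounded by the lines of the two edges at `vertex k`, of directions from which `T` reflects
in `vertex k`; and `-u` lies in the corresponding cone at `vertex l` up to an error that is
bounded independently of `M`. If the two cones met exactly, the edges at `vertex k` and at
`vertex l` would interlace in slope, which forces one of the two vertices to be the farthest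
vertex `w i` from an edge ending at the other one, `v i`; then `T (T M) - M = ±a i`.
Compactness of the unit circle gives this a margin, which absorbs the error once `‖M‖` is large.
-/

open MeasureTheory

/-- The planar wedge (cross) product: `u ∧ v = uₓ v_y − u_y vₓ`. -/
def wedge (u v : ℝ × ℝ) : ℝ := u.1 * v.2 - u.2 * v.1

/-- The angle in `[0, π)` of the line directed by the nonzero vector `u`. -/
noncomputable def lineAngle (u : ℝ × ℝ) : ℝ :=
  let θ := Complex.arg ⟨u.1, u.2⟩
  if θ < 0 then θ + Real.pi else if θ = Real.pi then 0 else θ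

/-- A finite family of real numbers is commensurate if they are all nonzero and all
pairwise ratios are rational. -/
def Commensurate {m : ℕ} (α : Fin m → ℝ) : Prop :=
  (∀ i, α i ≠ 0) ∧ ∀ i j, ∃ q : ℚ, α i = (q : ℝ) * α j

/-- A convex polygon in the plane with `n ≥ 3` vertices listed in counterclockwise order,
no three vertices collinear, no two edges parallel, together with the data describing
the slope ordering of its edges and, for each edge, the (unique) vertex farthest from
its supporting line.  Edge `i` (in slope order) is the segment from
`vertex (σ i)` to `vertex (σ i + 1)`. -/
structure ConvexPolygonSpokes (n : ℕ) [NeZero n] where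
  three_le : 3 ≤ n
  vertex : Fin n → ℝ × ℝ
  /-- every vertex lies strictly to the left of each directed edge: this encodes
  convexity, the counterclockwise orientation, and that no three vertices are collinear -/
  convex_ccw : ∀ i j : Fin n, j ≠ i → j ≠ i + 1 →
    0 < wedge (vertex (i + 1) - vertex i) (vertex j - vertex i)
  /-- no two edges are parallel -/
  no_parallel : ∀ i j : Fin n, i ≠ j →
    wedge (vertex (i + 1) - vertex i) (vertex (j + 1) - vertex j) ≠ 0
  /-- the permutation re-indexing the edges by slope -/
  σ : Equiv.Perm (Fin n)
  /-- the angles in `[0, π)` of the supporting lines are strictly increasing in slope order -/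
  slope_sorted : StrictMono fun i : Fin n => lineAngle (vertex (σ i + 1) - vertex (σ i))
  /-- index of the vertex of the polygon farthest (in Euclidean distance, equivalently in
  the absolute wedge with the edge direction) from the supporting line of the `i`-th edge -/
  wIdx : Fin n → Fin n
  wIdx_farthest : ∀ i j : Fin n, j ≠ wIdx i →
    |wedge (vertex (σ i + 1) - vertex (σ i)) (vertex j - vertex (σ i))| <
    |wedge (vertex (σ i + 1) - vertex (σ i)) (vertex (wIdx i) - vertex (σ i))|

namespace ConvexPolygonSpokes

variable {n : ℕ} [NeZero n] (P : ConvexPolygonSpokes n)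

/-- Direction vector of the `i`-th edge (in slope order). -/
def dir (i : Fin n) : ℝ × ℝ := P.vertex (P.σ i + 1) - P.vertex (P.σ i)

/-- `v i`: the second endpoint of the `i`-th edge in the counterclockwise traversal. -/
def v (i : Fin n) : ℝ × ℝ := P.vertex (P.σ i + 1)

/-- `w i`: the vertex farthest from the supporting line of the `i`-th edge. -/
def w (i : Fin n) : ℝ × ℝ := P.vertex (P.wIdx i)

/-- The spoke vector of the `i`-th edge: `a i = 2 (w i − v i)`. -/
def a (i : Fin n) : ℝ × ℝ := (2 : ℝ) • (P.w i - P.v i)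

/-- `d i`: the unique vector parallel to edge `i` such that `a i + d i` is parallel to
edge `i+1` (written explicitly; it exists and is unique since edges `i` and `i+1`
are not parallel). -/
noncomputable def d (i : Fin n) : ℝ × ℝ :=
  (-(wedge (P.dir (i + 1)) (P.a i)) / wedge (P.dir (i + 1)) (P.dir i)) • P.dir i

/-- The polygon (as a convex body): the convex hull of its vertices. -/
def polygon : Set (ℝ × ℝ) := convexHull ℝ (Set.range P.vertex)

/-- The closed strip bounded by the supporting line of the `i`-th edge and the parallel
line through the vertex `w i` farthest from it. -/
def strip (i : Fin n) : Set (ℝ × ℝ) :=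
  {p | 0 ≤ wedge (P.dir i) (p - P.vertex (P.σ i)) ∧
    wedge (P.dir i) (p - P.vertex (P.σ i)) ≤ wedge (P.dir i) (P.w i - P.vertex (P.σ i))}

/-- `OBStep M N` holds when the outer billiard map is defined at `M ∈ ℝ² ∖ P` — i.e. there
is a vertex `A` of `P` with `(A − M) ∧ (p − M) ≤ 0` for all `p ∈ P`, with equality only
for `p = A` — and `N = 2A − M` is the image of `M`. -/
def OBStep (M N : ℝ × ℝ) : Prop :=
  M ∉ P.polygon ∧ ∃ k : Fin n,
    (∀ p ∈ P.polygon, wedge (P.vertex k - M) (p - M) ≤ 0) ∧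
    (∀ p ∈ P.polygon, wedge (P.vertex k - M) (p - M) = 0 → p = P.vertex k) ∧
    N = (2 : ℝ) • P.vertex k - M

/-- A forward orbit of the outer billiard map. -/
def IsOrbit (M : ℕ → ℝ × ℝ) : Prop := ∀ k : ℕ, P.OBStep (M k) (M (k + 1))

/-- `P` is quasi-rational: the numbers `|a i ∧ a (i+1)|` are nonzero and commensurate. -/
def QuasiRational : Prop :=
  Commensurate fun i : Fin n => |wedge (P.a i) (P.a (i + 1))|

/-- `P` is rational: all its vertices lie on a lattice of `ℝ²`. -/
def Rational : Prop :=
  ∃ b₁ b₂ : ℝ × ℝ, LinearIndependent ℝ ![b₁, b₂] ∧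
    ∀ k : Fin n, ∃ m l : ℤ, P.vertex k = (m : ℝ) • b₁ + (l : ℝ) • b₂

/-- The system `d₁ + a₁ + t₂ a₂ + ⋯ + t_{i−1} a_{i−1} = t_i d_i` (for `i = 2, …, n`),
`d₁ + a₁ + t₂ a₂ + ⋯ + t_n a_n = −d₁` has a rational solution `(t₂, …, t_n)`
(indices shifted down by one: paper index `i` is `Fin`-index `i − 1`). -/
def SystemHasRatSolution : Prop :=
  ∃ t : Fin n → ℚ,
    (∀ i : Fin n, 0 < i →
      P.d 0 + P.a 0 + ∑ j ∈ Finset.Ioo 0 i, (t j : ℝ) • P.a j = (t i : ℝ) • P.d i) ∧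
    P.d 0 + P.a 0 + ∑ j ∈ Finset.Ioi (0 : Fin n), (t j : ℝ) • P.a j = - P.d 0

end ConvexPolygonSpokes

lemma wedge_self (u : ℝ × ℝ) : wedge u u = 0 := by
  simp only [wedge]; ring

lemma wedge_zero_right (u : ℝ × ℝ) : wedge u 0 = 0 := by
  simp [wedge]

lemma wedge_anticomm (u v : ℝ × ℝ) : wedge u v = -wedge v u := by
  simp only [wedge]; ring

lemma wedge_add_right (u v x : ℝ × ℝ) : wedge u (v + x) = wedge u v + wedge u x := by
  simp only [wedge, Prod.fst_add, Prod.snd_add]; ring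

lemma wedge_sub_right (u v x : ℝ × ℝ) : wedge u (v - x) = wedge u v - wedge u x := by
  simp only [wedge, Prod.fst_sub, Prod.snd_sub]; ring

lemma wedge_sub_left (u v x : ℝ × ℝ) : wedge (u - v) x = wedge u x - wedge v x := by
  simp only [wedge, Prod.fst_sub, Prod.snd_sub]; ring

lemma wedge_neg_left (u v : ℝ × ℝ) : wedge (-u) v = -wedge u v := by
  simp only [wedge, Prod.fst_neg, Prod.snd_neg]; ring

lemma wedge_smul_left (t : ℝ) (u v : ℝ × ℝ) : wedge (t • u) v = t * wedge u v := by
  simp only [wedge, Prod.smul_fst, Prod.smul_snd, smul_eq_mul]; ring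

lemma continuous_wedge_left (v : ℝ × ℝ) : Continuous fun u => wedge u v := by
  simp only [wedge]; fun_prop

/-- The Grassmann–Plücker relation. -/
lemma wedge_mul_wedge (c e f x : ℝ × ℝ) :
    wedge c x * wedge e f = wedge c f * wedge e x - wedge c e * wedge f x := by
  simp only [wedge]; ring

lemma eq_zero_of_wedge_eq_zero {a b u : ℝ × ℝ} (hab : wedge a b ≠ 0)
    (ha : wedge u a = 0) (hb : wedge u b = 0) : u = 0 := by
  simp only [wedge] at hab ha hb
  ext
  · exact (mul_eq_zero.mp (by linear_combination a.1 * hb - b.1 * ha :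
      u.1 * (a.1 * b.2 - a.2 * b.1) = 0)).resolve_right hab
  · exact (mul_eq_zero.mp (by linear_combination a.2 * hb - b.2 * ha :
      u.2 * (a.1 * b.2 - a.2 * b.1) = 0)).resolve_right hab

namespace Fin

variable {n : ℕ} [NeZero n]

lemma add_one_ne_self (h : 2 ≤ n) (k : Fin n) : k + 1 ≠ k := by
  simpa using (by omega : n ≠ 1)

lemma add_one_ne_sub_one (h : 3 ≤ n) (k : Fin n) : k + 1 ≠ k - 1 := by
  intro hk
  have h2 : (1 + 1 : Fin n) = 0 := add_eq_left.mp (by rw [← add_assoc, hk, sub_add_cancel])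
  rw [Fin.ext_iff] at h2
  simp [Fin.val_add, Nat.mod_eq_of_lt (show 2 < n by omega)] at h2

end Fin

namespace ConvexPolygonSpokes

variable {n : ℕ} [NeZero n] (P : ConvexPolygonSpokes n)

/-- Indexed in boundary order, whereas `dir` is indexed in slope order. -/
def edge (k : Fin n) : ℝ × ℝ := P.vertex (k + 1) - P.vertex k

lemma edge_sub_one (k : Fin n) : P.edge (k - 1) = P.vertex k - P.vertex (k - 1) := by
  rw [edge, sub_add_cancel]

lemma wedge_edge_sub_one_edge_pos (k : Fin n) : 0 < wedge (P.edge (k - 1)) (P.edge k) := by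
  have h := P.convex_ccw (k - 1) (k + 1) (Fin.add_one_ne_sub_one P.three_le k)
    (by rw [sub_add_cancel]; exact Fin.add_one_ne_self (by linarith [P.three_le]) k)
  have hsum : P.vertex (k + 1) - P.vertex (k - 1) = P.edge (k - 1) + P.edge k := by
    rw [edge_sub_one, edge]; abel
  rwa [sub_add_cancel, ← edge_sub_one, hsum, wedge_add_right, wedge_self, zero_add] at h

lemma edge_ne_zero (k : Fin n) : P.edge k ≠ 0 := by
  intro h
  simpa [h, wedge_zero_right] using P.wedge_edge_sub_one_edge_pos k

lemma wedge_edge_vertex_sub_nonneg (k p : Fin n) :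
    0 ≤ wedge (P.edge k) (P.vertex p - P.vertex k) := by
  by_cases hp : p = k
  · rw [hp, sub_self, wedge_zero_right]
  by_cases hp1 : p = k + 1
  · rw [hp1, ← edge, wedge_self]
  exact (P.convex_ccw k p hp hp1).le

lemma wedge_vertex_sub_neg {c : ℝ × ℝ} {k : Fin n} (hc : wedge c (P.edge k) < 0)
    (hc' : 0 < wedge c (P.edge (k - 1))) {p : Fin n} (hp : p ≠ k) :
    wedge c (P.vertex p - P.vertex k) < 0 := by
  by_cases hp1 : p = k + 1
  · rwa [hp1, ← edge]
  have hturn : wedge (P.edge k) (P.edge (k - 1)) < 0 := by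
    rw [wedge_anticomm]; linarith [P.wedge_edge_sub_one_edge_pos k]
  have hnext : 0 < wedge (P.edge k) (P.vertex p - P.vertex k) := P.convex_ccw k p hp hp1
  have hprev : 0 ≤ wedge (P.edge (k - 1)) (P.vertex p - P.vertex k) := by
    have h := P.wedge_edge_vertex_sub_nonneg (k - 1) p
    rwa [show P.vertex p - P.vertex (k - 1) = P.vertex p - P.vertex k + P.edge (k - 1) by
      rw [edge_sub_one]; abel, wedge_add_right, wedge_self, add_zero] at h
  -- `vertex p - vertex k` lies in the angle of `P` at `vertex k`, spanned by `edge k` and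
  -- `-edge (k - 1)`, both of which lie on the right of `c`.
  refine neg_of_mul_pos_left ?_ hturn.le
  rw [wedge_mul_wedge]
  nlinarith

/-- `σ.symm j` is the slope index of the boundary edge `edge j`. -/
lemma w_eq_vertex {j m : Fin n} (h : wedge (P.edge j) (P.edge m) < 0)
    (h' : 0 < wedge (P.edge j) (P.edge (m - 1))) : P.w (P.σ.symm j) = P.vertex m := by
  by_contra hne
  have hfar := P.wIdx_farthest (P.σ.symm j) m (fun hm => hne (by rw [w, ← hm]))
  simp only [Equiv.apply_symm_apply] at hfar
  rw [← edge, abs_of_nonneg (P.wedge_edge_vertex_sub_nonneg j m),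
    abs_of_nonneg (P.wedge_edge_vertex_sub_nonneg j _)] at hfar
  have hlt := P.wedge_vertex_sub_neg h h' (p := P.wIdx (P.σ.symm j)) (fun hm => hne (by rw [w, hm]))
  rw [show P.vertex (P.wIdx (P.σ.symm j)) - P.vertex m = (P.vertex (P.wIdx (P.σ.symm j)) -
    P.vertex j) - (P.vertex m - P.vertex j) by abel, wedge_sub_right] at hlt
  linarith

lemma v_symm_sub_one (k : Fin n) : P.v (P.σ.symm (k - 1)) = P.vertex k := by
  rw [v, Equiv.apply_symm_apply, sub_add_cancel]

def SpokeJoins (k l : Fin n) : Prop :=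
  ∃ i, (P.v i = P.vertex k ∧ P.w i = P.vertex l) ∨ (P.v i = P.vertex l ∧ P.w i = P.vertex k)

variable {P} in
lemma SpokeJoins.symm {k l : Fin n} (h : P.SpokeJoins k l) : P.SpokeJoins l k :=
  let ⟨i, hi⟩ := h
  ⟨i, hi.symm⟩

lemma spokeJoins_of_cones_of_pos {k l : Fin n} {u : ℝ × ℝ} (hu : u ≠ 0)
    (hk' : 0 ≤ wedge u (P.edge (k - 1))) (hl : 0 ≤ wedge u (P.edge l))
    (hl' : wedge u (P.edge (l - 1)) ≤ 0) (hkl : 0 < wedge (P.edge (k - 1)) (P.edge (l - 1))) :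
    P.SpokeJoins k l := by
  have hcd := P.wedge_edge_sub_one_edge_pos l
  have hne : l ≠ k - 1 := by
    rintro rfl
    rw [wedge_anticomm] at hkl
    linarith
  have hturn : wedge (P.edge (k - 1)) (P.edge l) < 0 := by
    have hpar : wedge (P.edge (k - 1)) (P.edge l) ≠ 0 := P.no_parallel (k - 1) l hne.symm
    refine hpar.lt_or_gt.resolve_right fun hpos => hu ?_
    have hplucker := wedge_mul_wedge u (P.edge (k - 1)) (P.edge (l - 1)) (P.edge l)
    have hul : wedge u (P.edge l) = 0 := by nlinarith [mul_nonneg hk' hcd.le]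
    have huk : wedge u (P.edge (k - 1)) = 0 := by nlinarith [mul_nonneg hl hkl.le]
    exact eq_zero_of_wedge_eq_zero hpar huk hul
  exact ⟨P.σ.symm (k - 1), Or.inl ⟨P.v_symm_sub_one k, P.w_eq_vertex hturn hkl⟩⟩

lemma spokeJoins_of_cones {k l : Fin n} {u : ℝ × ℝ} (hu : u ≠ 0)
    (hk : wedge u (P.edge k) ≤ 0) (hk' : 0 ≤ wedge u (P.edge (k - 1)))
    (hl : 0 ≤ wedge u (P.edge l)) (hl' : wedge u (P.edge (l - 1)) ≤ 0) :
    P.SpokeJoins k l := by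
  rcases lt_trichotomy (wedge (P.edge (k - 1)) (P.edge (l - 1))) 0 with hkl | hkl | hkl
  · -- the hypotheses are symmetric under `(k, l, u) ↦ (l, k, -u)`
    have hlk : 0 < wedge (P.edge (l - 1)) (P.edge (k - 1)) := by
      rw [wedge_anticomm]; linarith
    refine (P.spokeJoins_of_cones_of_pos (neg_ne_zero.mpr hu) ?_ ?_ ?_ hlk).symm <;>
      simp only [wedge_neg_left] <;> linarith
  · have hkl' : k = l := by
      by_contra hne
      exact P.no_parallel (k - 1) (l - 1) (fun h => hne (sub_left_inj.mp h)) hkl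
    subst hkl'
    exact absurd (eq_zero_of_wedge_eq_zero (P.wedge_edge_sub_one_edge_pos k).ne'
      (le_antisymm hl' hk') (le_antisymm hk hl)) hu
  · exact P.spokeJoins_of_cones_of_pos hu hk' hl hl' hkl

/-- A margin version of `spokeJoins_of_cones`, obtained by compactness of the unit circle. -/
lemma exists_pos_spokeJoins_of_near_cones (k l : Fin n) :
    ∃ ε > 0, ∀ u : ℝ × ℝ, u ≠ 0 →
      wedge u (P.edge k) ≤ 0 → 0 ≤ wedge u (P.edge (k - 1)) →
      -(ε * ‖u‖) < wedge u (P.edge l) → wedge u (P.edge (l - 1)) < ε * ‖u‖ →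
      P.SpokeJoins k l := by
  by_cases hkl : P.SpokeJoins k l
  · exact ⟨1, one_pos, fun _ _ _ _ _ _ => hkl⟩
  set S : Set (ℝ × ℝ) := Metric.sphere 0 1 ∩
    {u | wedge u (P.edge k) ≤ 0 ∧ 0 ≤ wedge u (P.edge (k - 1))}
  have hS : IsCompact S := (isCompact_sphere 0 1).inter_right <|
    (isClosed_le (continuous_wedge_left _) continuous_const).inter
      (isClosed_le continuous_const (continuous_wedge_left _))
  have hpos : ∀ u ∈ S, 0 < max (-wedge u (P.edge l)) (wedge u (P.edge (l - 1))) := by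
    rintro u ⟨hu, h1, h2⟩
    by_contra! hle
    rw [max_le_iff, neg_nonpos] at hle
    refine hkl (P.spokeJoins_of_cones ?_ h1 h2 hle.1 hle.2)
    rintro rfl
    simp at hu
  obtain ⟨ε, hε, hmin⟩ := hS.exists_forall_le'
    ((continuous_wedge_left _).neg.max (continuous_wedge_left _)).continuousOn hpos
  refine ⟨ε, hε, fun u hu h1 h2 h3 h4 => absurd (hmin (‖u‖⁻¹ • u) ?_) ?_⟩
  all_goals have hnorm : 0 < ‖u‖⁻¹ := inv_pos.mpr (norm_pos_iff.mpr hu)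
  · refine ⟨by simp [norm_smul, hu], ?_⟩
    simp only [Set.mem_ofPred_eq, wedge_smul_left]
    exact ⟨mul_nonpos_of_nonneg_of_nonpos hnorm.le h1, mul_nonneg hnorm.le h2⟩
  · have hcancel : ‖u‖⁻¹ * (ε * ‖u‖) = ε := by field_simp
    simp only [Pi.neg_apply, wedge_smul_left, le_max_iff, not_or, not_le]
    constructor <;>
      linarith [mul_lt_mul_of_pos_left h3 hnorm, mul_lt_mul_of_pos_left h4 hnorm]

/-- `P` lies on the right of the line from `M` through `vertex k` and touches it only at
`vertex k`, so that the outer billiard map reflects `M` in `vertex k`. -/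
def IsPivot (k : Fin n) (M : ℝ × ℝ) : Prop :=
  wedge (P.vertex k - M) (P.edge k) < 0 ∧ 0 < wedge (P.vertex k - M) (P.edge (k - 1))

variable {P} in
lemma OBStep.exists_isPivot {M N : ℝ × ℝ} (h : P.OBStep M N) :
    ∃ k, P.IsPivot k M ∧ N = (2 : ℝ) • P.vertex k - M := by
  obtain ⟨-, k, hle, heq, hN⟩ := h
  have hlt (p : Fin n) (hp : P.vertex p ≠ P.vertex k) :
      wedge (P.vertex k - M) (P.vertex p - M) < 0 :=
    have hmem := subset_convexHull ℝ _ (Set.mem_range_self p)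
    (hle _ hmem).lt_of_ne (mt (heq _ hmem) hp)
  refine ⟨k, ⟨?_, ?_⟩, hN⟩
  · have h := hlt (k + 1) (sub_ne_zero.mp (P.edge_ne_zero k))
    rwa [show P.vertex (k + 1) - M = P.edge k + (P.vertex k - M) by rw [edge]; abel,
      wedge_add_right, wedge_self, add_zero] at h
  · have h := hlt (k - 1) (sub_ne_zero.mp (P.edge_sub_one k ▸ P.edge_ne_zero (k - 1))).symm
    rw [show P.vertex (k - 1) - M = (P.vertex k - M) - P.edge (k - 1) by rw [edge_sub_one]; abel,
      wedge_sub_right, wedge_self, zero_sub] at h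
    linarith

lemma exists_spokeJoins_of_isPivot (k l : Fin n) :
    ∃ R, ∀ M : ℝ × ℝ, R < ‖M‖ → P.IsPivot k M → P.IsPivot l ((2 : ℝ) • P.vertex k - M) →
      P.SpokeJoins k l := by
  obtain ⟨ε, hε, hjoin⟩ := P.exists_pos_spokeJoins_of_near_cones k l
  set x := P.vertex l - P.vertex k
  set C := |wedge x (P.edge l)| + |wedge x (P.edge (l - 1))|
  refine ⟨‖P.vertex k‖ + C / ε, fun M hM ⟨h1, h2⟩ ⟨h3, h4⟩ => ?_⟩
  set u := P.vertex k - M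
  have hfar : C < ε * ‖u‖ := by
    have : ‖M‖ - ‖P.vertex k‖ ≤ ‖u‖ := by
      simpa [u, norm_sub_rev] using norm_sub_norm_le M (P.vertex k)
    rw [← div_lt_iff₀' hε]
    linarith
  have hC : 0 ≤ C := by positivity
  have hu : u ≠ 0 := norm_pos_iff.mp (pos_of_mul_pos_right (hC.trans_lt hfar) hε.le)
  rw [show P.vertex l - ((2 : ℝ) • P.vertex k - M) = x - u by simp only [x, u]; module,
    wedge_sub_left] at h3 h4
  refine hjoin u hu h1.le h2.le ?_ ?_
  · linarith [neg_abs_le (wedge x (P.edge l)), abs_nonneg (wedge x (P.edge (l - 1)))]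
  · linarith [le_abs_self (wedge x (P.edge (l - 1))), abs_nonneg (wedge x (P.edge l))]

end ConvexPolygonSpokes

/-- far enough from the polygon, the square of the outer billiard map is a
translation by one of the signed spoke vectors: there is `R > 0` such that whenever
`‖M‖ > R`, `T` is defined at `M` with image `N`, and `T` is defined at `N` with image
`L`, then `L − M ∈ {±a 1, …, ±a n}`. -/
theorem far_double_step_is_spoke_translation {n : ℕ} [NeZero n]
    (P : ConvexPolygonSpokes n) :
    ∃ R : ℝ, 0 < R ∧ ∀ M N L : ℝ × ℝ, R < ‖M‖ →
      P.OBStep M N → P.OBStep N L →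
      ∃ i : Fin n, L - M = P.a i ∨ L - M = -(P.a i) := by
  choose R hR using fun kl : Fin n × Fin n => P.exists_spokeJoins_of_isPivot kl.1 kl.2
  obtain ⟨R₀, hR₀⟩ := Finite.exists_le R
  refine ⟨max R₀ 1, by positivity, fun M N L hM hMN hNL => ?_⟩
  obtain ⟨k, hk, rfl⟩ := hMN.exists_isPivot
  obtain ⟨l, hl, rfl⟩ := hNL.exists_isPivot
  obtain ⟨i, hi⟩ := hR (k, l) M ((hR₀ (k, l)).trans_lt ((le_max_left _ _).trans_lt hM)) hk hl
  refine ⟨i, ?_⟩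
  rcases hi with ⟨hv, hw⟩ | ⟨hv, hw⟩
  · left
    rw [ConvexPolygonSpokes.a, hv, hw]
    module
  · right
    rw [ConvexPolygonSpokes.a, hv, hw]
    module
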